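/- Let R:(0,∞)→[0,∞) be eventually monotone and regularly varying at +∞ with index −α where α<1, let σ_n² = Σ_{k=1}^n R(k), and let ρ_n(t) = σ_n^{−2} Σ_{k=1}^n R(k) cos(2πkt/n). Then for every ε>0 there exists T=T(ε)>0 such that for every n∈ℕ and every real t∈[T, n/2], ρ_n(t) log t < ε. -/

import Mathlib

/-!
Write `θ = 2πt/n` and split the numerator of `ρ_n(t)` at an index `M ≍ n/t`. Below `M`, bound the
cosines by `1` and use Karamata's bound `∑_{k ≤ M} R(k) ≲ M R(M)`. Above `M`, where `R` is monotone,
Abel summation against the Dirichlet kernel `|∑_{k<j} cos kθ| ≤ 1/sin(θ/2) ≤ n/(2t)` costs at most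
`(R(M+1) + R(n)) n/t ≲ M R(M) + n R(n)/t`. The denominator is `≳ n R(n)`, since `R` varies by a
bounded factor on `[n/2, n]`. Finally, for any `β ∈ [0, 1)` with `β > α`, Potter's bound
`R(x) ≤ 2^β (y/x)^β R(y)` (for `X ≤ x ≤ y`) only needs eventual monotonicity and the doubling limit
`R(2x)/R(x) → 2^{-α}`; it gives `M R(M) / (n R(n)) ≲ (M/n)^{1-β} ≲ t^{-(1-β)}`. Hence
`ρ_n(t) ≲ t^{-(1-β)}`, and `t^{-(1-β)} log t → 0`.
-/

open Filter Real

/-- A function `f` is regularly varying at `+∞` with index `β` if for every `λ > 0`,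
`f(λx)/f(x) → λ^β` as `x → +∞`. -/
def RegularlyVarying (f : ℝ → ℝ) (β : ℝ) : Prop :=
  ∀ l : ℝ, 0 < l → Filter.Tendsto (fun x => f (l * x) / f x) Filter.atTop (nhds (l ^ β))

/-- A function is eventually monotone if it is monotone on some interval `(A, ∞)`. -/
def EventuallyMonotone (f : ℝ → ℝ) : Prop :=
  ∃ A : ℝ, MonotoneOn f (Set.Ioi A) ∨ AntitoneOn f (Set.Ioi A)

open Finset

lemma abs_sum_range_cos_mul_le {θ : ℝ} (hθ : 0 < sin (θ / 2)) (j : ℕ) :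
    |∑ k ∈ range j, cos (k * θ)| ≤ 1 / sin (θ / 2) := by
  have telescope : (∑ k ∈ range j, cos (k * θ)) * (2 * sin (θ / 2)) =
      sin ((j - 1 / 2) * θ) + sin (θ / 2) := by
    convert sum_range_sub (fun k : ℕ => sin ((k - 1 / 2) * θ)) j using 1
    · rw [sum_mul]
      refine sum_congr rfl fun k _ => ?_
      rw [Real.sin_sub_sin]
      push_cast
      ring_nf
    · rw [Nat.cast_zero, zero_sub, neg_mul, one_div_mul_eq_div, sin_neg, sub_neg_eq_add]
  rw [le_div_iff₀ hθ]
  have h2 : |sin ((j - 1 / 2) * θ) + sin (θ / 2)| ≤ 2 := by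
    grw [abs_add_le, abs_sin_le_one, abs_sin_le_one]; norm_num
  rw [← telescope, abs_mul, abs_of_pos (by positivity : (0:ℝ) < 2 * sin (θ / 2))] at h2
  linarith

lemma abs_sum_range_cos_le {n : ℕ} {t : ℝ} (ht : 0 < t) (htn : t ≤ n / 2) (j : ℕ) :
    |∑ k ∈ range j, cos (2 * π * k * t / n)| ≤ n / (2 * t) := by
  have hn : (0 : ℝ) < n := by linarith
  have hsin : 2 * t / n ≤ sin (2 * π * t / n / 2) := by
    have h := mul_le_sin (x := π * t / n) (by positivity) (by
      rw [div_le_div_iff₀ hn two_pos]; nlinarith [pi_pos])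
    calc 2 * t / n = 2 / π * (π * t / n) := by field_simp
      _ ≤ _ := h
      _ = _ := by ring_nf
  have hpos : 0 < 2 * t / n := by positivity
  calc |∑ k ∈ range j, cos (2 * π * k * t / n)| = |∑ k ∈ range j, cos (k * (2 * π * t / n))| := by
        simp only [mul_div_assoc', mul_comm, mul_left_comm]
    _ ≤ 1 / sin (2 * π * t / n / 2) := abs_sum_range_cos_mul_le (hpos.trans_le hsin) j
    _ ≤ 1 / (2 * t / n) := one_div_le_one_div_of_le hpos hsin
    _ = n / (2 * t) := one_div_div _ _

lemma sum_Ico_abs_sub_eq_of_monotoneOn_or_antitoneOn {f : ℕ → ℝ} {m n : ℕ} (hmn : m ≤ n)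
    (hf : MonotoneOn f (Set.Ici m) ∨ AntitoneOn f (Set.Ici m)) :
    ∑ i ∈ Ico m n, |f (i + 1) - f i| = |f n - f m| := by
  induction n, hmn using Nat.le_induction with
  | base => simp
  | succ n hmn ih =>
    rw [sum_Ico_succ_top hmn, ih]
    have hm : m ∈ Set.Ici m := Set.mem_Ici.2 le_rfl
    have hn : n ∈ Set.Ici m := hmn
    have hn1 : n + 1 ∈ Set.Ici m := Set.mem_Ici.2 (hmn.trans n.le_succ)
    rcases hf with hf | hf
    · have := hf hm hn hmn
      have := hf hn hn1 n.le_succ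
      rw [abs_of_nonneg, abs_of_nonneg, abs_of_nonneg] <;> linarith
    · have := hf hm hn hmn
      have := hf hn hn1 n.le_succ
      rw [abs_of_nonpos, abs_of_nonpos, abs_of_nonpos] <;> linarith

lemma abs_sum_Icc_mul_le_of_monotoneOn_or_antitoneOn {f g : ℕ → ℝ} {m n : ℕ} {B : ℝ}
    (hmn : m ≤ n) (hf : MonotoneOn f (Set.Ici m) ∨ AntitoneOn f (Set.Ici m))
    (hg : ∀ j, |∑ i ∈ range j, g i| ≤ B) :
    |∑ i ∈ Icc m n, f i * g i| ≤ 2 * (|f m| + |f n|) * B := by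
  have hB : 0 ≤ B := (abs_nonneg _).trans (hg 0)
  have hterm : ∀ i ∈ Ico m n, |(f (i + 1) - f i) * ∑ k ∈ range (i + 1), g k| ≤
      |f (i + 1) - f i| * B := fun i _ => by
    rw [abs_mul]; exact mul_le_mul_of_nonneg_left (hg _) (abs_nonneg _)
  have hvar := sum_Ico_abs_sub_eq_of_monotoneOn_or_antitoneOn hmn hf
  have hparts := sum_Ico_by_parts f g (Nat.lt_add_one_of_le hmn)
  simp only [smul_eq_mul, Nat.add_sub_cancel] at hparts
  rw [← Ico_add_one_right_eq_Icc, hparts]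
  calc _ ≤ |f n * ∑ k ∈ range (n + 1), g k| + |f m * ∑ k ∈ range m, g k| +
        ∑ i ∈ Ico m n, |(f (i + 1) - f i) * ∑ k ∈ range (i + 1), g k| :=
        (abs_sub _ _).trans (add_le_add (abs_sub _ _) (abs_sum_le_sum_abs _ _))
    _ ≤ |f n| * B + |f m| * B + |f n - f m| * B := by
        rw [abs_mul, abs_mul, ← hvar, sum_mul]
        gcongr
        · exact hg _
        · exact hg _
        · exact hterm _ ‹_›
    _ ≤ 2 * (|f m| + |f n|) * B := by
        have := abs_sub (f n) (f m)
        nlinarith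

lemma Nat.Icc_one_eq_Ioc_zero (n : ℕ) : Icc 1 n = Ioc 0 n := Finset.Icc_add_one_left_eq_Ioc 0 n

lemma sum_mul_cos_le {a : ℕ → ℝ} {M n : ℕ} {t : ℝ} (ht : 0 < t) (htn : t ≤ n / 2) (hMn : M < n)
    (ha : ∀ k, 1 ≤ k → 0 ≤ a k)
    (hmono : MonotoneOn a (Set.Ici (M + 1)) ∨ AntitoneOn a (Set.Ici (M + 1))) :
    ∑ k ∈ Icc 1 n, a k * cos (2 * π * k * t / n) ≤
      ∑ k ∈ Icc 1 M, a k + (a (M + 1) + a n) * (n / t) := by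
  rw [Nat.Icc_one_eq_Ioc_zero, Nat.Icc_one_eq_Ioc_zero, ← sum_Ioc_consecutive _ M.zero_le hMn.le,
    ← Icc_add_one_left_eq_Ioc M n]
  have hhead : ∑ k ∈ Ioc 0 M, a k * cos (2 * π * k * t / n) ≤ ∑ k ∈ Ioc 0 M, a k :=
    sum_le_sum fun k hk => mul_le_of_le_one_right (ha k (mem_Ioc.1 hk).1) (cos_le_one _)
  have htail := abs_sum_Icc_mul_le_of_monotoneOn_or_antitoneOn hMn hmono
    (abs_sum_range_cos_le ht htn)
  rw [abs_of_nonneg (ha _ (by omega)), abs_of_nonneg (ha _ (by omega))] at htail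
  have hB : 2 * (a (M + 1) + a n) * (n / (2 * t)) = (a (M + 1) + a n) * (n / t) := by
    field_simp
  linarith [le_abs_self (∑ k ∈ Icc (M + 1) n, a k * cos (2 * π * k * t / n))]

lemma half_mul_le_sum_Icc {a : ℕ → ℝ} {n : ℕ} {b : ℝ} (hb : 0 ≤ b) (ha : ∀ k, 1 ≤ k → 0 ≤ a k)
    (hab : ∀ k, n < 2 * k → k ≤ n → b ≤ a k) : n / 2 * b ≤ ∑ k ∈ Icc 1 n, a k := by
  have hcard : (n : ℝ) / 2 ≤ #(Icc (n / 2 + 1) n) := by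
    rw [Nat.card_Icc, Nat.add_sub_add_right]
    have : n ≤ 2 * (n - n / 2) := by omega
    have := (Nat.cast_le (α := ℝ)).2 this
    push_cast at this
    linarith
  calc n / 2 * b ≤ #(Icc (n / 2 + 1) n) • b := by rw [nsmul_eq_mul]; gcongr
    _ ≤ ∑ k ∈ Icc (n / 2 + 1) n, a k :=
        card_nsmul_le_sum _ _ _ fun k hk => hab k (by have := mem_Icc.1 hk; omega) (mem_Icc.1 hk).2
    _ ≤ ∑ k ∈ Icc 1 n, a k :=
        sum_le_sum_of_subset_of_nonneg (Icc_subset_Icc (by omega) le_rfl)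
          fun k hk _ => ha k (mem_Icc.1 hk).1

lemma rpow_neg_le_rpow_sub_rpow {β x : ℝ} (hβ0 : 0 ≤ β) (hβ1 : β < 1) (hx : 1 ≤ x) :
    (1 - β) * x ^ (-β) ≤ x ^ (1 - β) - (x - 1) ^ (1 - β) := by
  have hx0 : 0 < x := by linarith
  have bernoulli := rpow_one_add_le_one_add_mul_self (s := -x⁻¹)
    (by linarith [inv_le_one_of_one_le₀ hx]) (p := 1 - β) (by linarith) (by linarith)
  have hsplit : (x - 1) ^ (1 - β) = (1 + -x⁻¹) ^ (1 - β) * x ^ (1 - β) := by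
    rw [← mul_rpow (by linarith [inv_le_one_of_one_le₀ hx]) hx0.le]
    congr 1; field_simp; ring
  have hpow : x ^ (1 - β) * x⁻¹ = x ^ (-β) := by
    rw [rpow_sub hx0, rpow_one, rpow_neg hx0.le]; field_simp
  rw [hsplit]
  nlinarith [rpow_pos_of_pos hx0 (1 - β)]

lemma sum_Icc_rpow_neg_le {β : ℝ} (hβ0 : 0 ≤ β) (hβ1 : β < 1) (M : ℕ) :
    ∑ k ∈ Icc 1 M, (k : ℝ) ^ (-β) ≤ (M : ℝ) ^ (1 - β) / (1 - β) := by
  induction M with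
  | zero => simp [zero_rpow (by linarith : 1 - β ≠ 0)]
  | succ M ih =>
    rw [sum_Icc_succ_top (by omega)]
    have hstep := rpow_neg_le_rpow_sub_rpow hβ0 hβ1 (x := (M + 1 : ℕ)) (by simp)
    push_cast at hstep ⊢
    rw [add_sub_cancel_right] at hstep
    rw [le_div_iff₀ (by linarith)] at ih ⊢
    linarith

lemma mem_uIcc_of_monotoneOn_or_antitoneOn {f : ℝ → ℝ} {X x y z : ℝ}
    (hf : MonotoneOn f (Set.Ici X) ∨ AntitoneOn f (Set.Ici X)) (hx : X ≤ x) (hxy : x ≤ y)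
    (hyz : y ≤ z) : f y ∈ Set.uIcc (f x) (f z) := by
  have hsub : Set.uIcc x z ⊆ Set.Ici X := by
    rw [Set.uIcc_of_le (hxy.trans hyz)]; exact fun w hw => hx.trans hw.1
  have hy : y ∈ Set.uIcc x z := Set.Icc_subset_uIcc ⟨hxy, hyz⟩
  rcases hf with hf | hf
  · exact (hf.mono hsub).mapsTo_uIcc hy
  · exact (hf.mono hsub).mapsTo_uIcc hy

lemma exists_nat_div_le_and_div_le_div (K₀ n : ℕ) {t : ℝ} (ht : K₀ + 2 ≤ t) (htn : t ≤ n / 2) :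
    ∃ M : ℕ, K₀ ≤ M ∧ n / t ≤ M ∧ (M : ℝ) / n ≤ (K₀ + 2) / t ∧ M < n := by
  have hK₀ : (0 : ℝ) ≤ K₀ := K₀.cast_nonneg
  have ht0 : 0 < t := by linarith
  have hn0 : (0 : ℝ) < n := by linarith
  have hnt : 2 ≤ (n : ℝ) / t := by rw [le_div_iff₀ ht0]; linarith
  have hnt' : (n : ℝ) / t ≤ n / 2 := div_le_div_of_nonneg_left hn0.le two_pos (by linarith)
  have hceil := Nat.ceil_lt_add_one (by linarith : (0 : ℝ) ≤ n / t)
  refine ⟨max ⌈(n : ℝ) / t⌉₊ K₀, le_max_right _ _, (Nat.le_ceil _).trans (by simp), ?_, ?_⟩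
  · rw [div_le_div_iff₀ hn0 ht0, Nat.cast_max, max_mul_of_nonneg _ _ ht0.le, max_le_iff]
    have hceil' : ⌈(n : ℝ) / t⌉₊ * t < n + t := by
      have := mul_lt_mul_of_pos_right hceil ht0
      rwa [add_mul, div_mul_cancel₀ _ ht0.ne', one_mul] at this
    rw [le_div_iff₀ ht0] at hnt
    constructor <;> nlinarith
  · rw [max_lt_iff]
    constructor
    · exact_mod_cast (by linarith : (⌈(n : ℝ) / t⌉₊ : ℝ) < n)
    · exact_mod_cast (by linarith : (K₀ : ℝ) < n)

noncomputable def rescaledCovariance (R : ℝ → ℝ) (n : ℕ) (t : ℝ) : ℝ :=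
  (∑ k ∈ Icc 1 n, R k * cos (2 * π * k * t / n)) / ∑ k ∈ Icc 1 n, R k

section RegularVariation

variable {R : ℝ → ℝ} {X β D : ℝ}

lemma le_two_rpow_mul_of_le_two_mul (hmono : MonotoneOn R (Set.Ici X) ∨ AntitoneOn R (Set.Ici X))
    (hnn : ∀ x, X ≤ x → 0 ≤ R x) (hβ : 0 ≤ β) (hlow : ∀ x, X ≤ x → R x ≤ 2 ^ β * R (2 * x))
    {x y : ℝ} (hx : X ≤ x) (hxy : x ≤ y) (hy : y ≤ 2 * x) : R x ≤ 2 ^ β * R y := by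
  have hβ2 : 1 ≤ (2 : ℝ) ^ β := one_le_rpow (by norm_num) hβ
  have hself : R x ≤ 2 ^ β * R x := le_mul_of_one_le_left (hnn x hx) hβ2
  rcases Set.mem_uIcc.1 (mem_uIcc_of_monotoneOn_or_antitoneOn hmono hx hxy hy) with h | h
  · exact hself.trans (by gcongr; exact h.1)
  · exact (hlow x hx).trans (by gcongr; exact h.1)

lemma le_mul_of_le_two_mul (hmono : MonotoneOn R (Set.Ici X) ∨ AntitoneOn R (Set.Ici X))
    (hnn : ∀ x, X ≤ x → 0 ≤ R x) (hD : 1 ≤ D) (hup : ∀ x, X ≤ x → R (2 * x) ≤ D * R x)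
    {x y : ℝ} (hx : X ≤ x) (hxy : x ≤ y) (hy : y ≤ 2 * x) : R y ≤ D * R x := by
  rcases Set.mem_uIcc.1 (mem_uIcc_of_monotoneOn_or_antitoneOn hmono hx hxy hy) with h | h
  · exact h.2.trans (hup x hx)
  · exact h.2.trans (le_mul_of_one_le_left (hnn x hx) hD)

lemma potter_bound (hmono : MonotoneOn R (Set.Ici X) ∨ AntitoneOn R (Set.Ici X)) (hX : 0 < X)
    (hnn : ∀ x, X ≤ x → 0 ≤ R x) (hβ : 0 ≤ β) (hlow : ∀ x, X ≤ x → R x ≤ 2 ^ β * R (2 * x))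
    {x y : ℝ} (hx : X ≤ x) (hxy : x ≤ y) : R x ≤ 2 ^ β * (y / x) ^ β * R y := by
  suffices key : ∀ j : ℕ, ∀ x y, X ≤ x → x ≤ y → y ≤ 2 ^ j * x →
      R x ≤ 2 ^ β * (y / x) ^ β * R y by
    obtain ⟨j, hj⟩ := pow_unbounded_of_one_lt (y / x) (by norm_num : (1 : ℝ) < 2)
    exact key j x y hx hxy (by rw [div_lt_iff₀ (hX.trans_le hx)] at hj; exact hj.le)
  have near : ∀ x y, X ≤ x → x ≤ y → y ≤ 2 * x → R x ≤ 2 ^ β * (y / x) ^ β * R y := by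
    intro x y hx hxy hy
    calc R x ≤ 2 ^ β * R y := le_two_rpow_mul_of_le_two_mul hmono hnn hβ hlow hx hxy hy
      _ ≤ 2 ^ β * (y / x) ^ β * R y := by
        rw [mul_assoc]
        gcongr
        exact le_mul_of_one_le_left (hnn y (hx.trans hxy))
          (one_le_rpow ((one_le_div (hX.trans_le hx)).2 hxy) hβ)
  intro j
  induction j with
  | zero =>
    intro x y hx hxy hy
    exact near x y hx hxy (by linarith [hX.trans_le hx])
  | succ j ih =>
    intro x y hx hxy hy
    rcases le_or_gt y (2 * x) with h2x | h2x
    · exact near x y hx hxy h2x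
    have hx0 : 0 < x := hX.trans_le hx
    have hy0 : 0 < y := hx0.trans_le hxy
    calc R x ≤ 2 ^ β * R (2 * x) := hlow x hx
      _ ≤ 2 ^ β * (2 ^ β * (y / (2 * x)) ^ β * R y) := by
        gcongr
        exact ih (2 * x) y (by linarith) h2x.le (by rw [pow_succ] at hy; linarith)
      _ = 2 ^ β * (y / x) ^ β * R y := by
        rw [← mul_assoc, ← mul_rpow (by norm_num) (by positivity)]
        field_simp

lemma potter_bound_mul_self (hmono : MonotoneOn R (Set.Ici X) ∨ AntitoneOn R (Set.Ici X))
    (hX : 0 < X) (hnn : ∀ x, X ≤ x → 0 ≤ R x) (hβ : 0 ≤ β)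
    (hlow : ∀ x, X ≤ x → R x ≤ 2 ^ β * R (2 * x)) {x y : ℝ} (hx : X ≤ x) (hxy : x ≤ y) :
    x * R x ≤ 2 ^ β * (x / y) ^ (1 - β) * (y * R y) := by
  have hx0 : 0 < x := hX.trans_le hx
  have hy0 : 0 < y := hx0.trans_le hxy
  have hpow : (x / y) ^ (1 - β) * y = x * (y / x) ^ β := by
    rw [rpow_sub (by positivity), rpow_one, div_rpow hx0.le hy0.le, div_rpow hy0.le hx0.le]
    field_simp
  calc x * R x ≤ x * (2 ^ β * (y / x) ^ β * R y) :=
        mul_le_mul_of_nonneg_left (potter_bound hmono hX hnn hβ hlow hx hxy) hx0.le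
    _ = 2 ^ β * ((x / y) ^ (1 - β) * y) * R y := by rw [hpow]; ring
    _ = 2 ^ β * (x / y) ^ (1 - β) * (y * R y) := by ring

lemma potter_bound_mul_self_of_div_le
    (hmono : MonotoneOn R (Set.Ici X) ∨ AntitoneOn R (Set.Ici X)) (hX : 0 < X)
    (hnn : ∀ x, X ≤ x → 0 ≤ R x) (hβ0 : 0 ≤ β) (hβ1 : β ≤ 1)
    (hlow : ∀ x, X ≤ x → R x ≤ 2 ^ β * R (2 * x)) {x y a t : ℝ} (hx : X ≤ x) (hxy : x ≤ y)
    (ht : 0 < t) (hdiv : x / y ≤ a / t) :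
    x * R x ≤ 2 ^ β * a ^ (1 - β) * t ^ (-(1 - β)) * (y * R y) := by
  have hx0 : 0 < x := hX.trans_le hx
  have hy0 : 0 < y := hx0.trans_le hxy
  have hpow : (x / y) ^ (1 - β) ≤ a ^ (1 - β) * t ^ (-(1 - β)) := by
    have ha : 0 ≤ a := by
      have := (div_pos hx0 hy0).trans_le hdiv
      exact (div_pos_iff_of_pos_right ht).1 this |>.le
    rw [rpow_neg ht.le, ← div_eq_mul_inv, ← div_rpow ha ht.le]
    exact rpow_le_rpow (by positivity) hdiv (by linarith)
  calc x * R x ≤ 2 ^ β * (x / y) ^ (1 - β) * (y * R y) :=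
        potter_bound_mul_self hmono hX hnn hβ0 hlow hx hxy
    _ ≤ 2 ^ β * (a ^ (1 - β) * t ^ (-(1 - β))) * (y * R y) := by
        have := hnn y (hx.trans hxy)
        gcongr
    _ = _ := by ring

lemma sum_Ioc_le_mul (hmono : MonotoneOn R (Set.Ici X) ∨ AntitoneOn R (Set.Ici X)) (hX : 0 < X)
    (hnn : ∀ x, X ≤ x → 0 ≤ R x) (hβ0 : 0 ≤ β) (hβ1 : β < 1)
    (hlow : ∀ x, X ≤ x → R x ≤ 2 ^ β * R (2 * x)) {K₀ M : ℕ} (hK₀ : X ≤ K₀) (hM : K₀ ≤ M) :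
    ∑ k ∈ Ioc K₀ M, R k ≤ 2 ^ β / (1 - β) * (M * R M) := by
  have hXM : X ≤ M := hK₀.trans (Nat.cast_le.2 hM)
  have hM0 : (0 : ℝ) < M := hX.trans_le hXM
  have hRM := hnn M hXM
  calc ∑ k ∈ Ioc K₀ M, R k ≤ ∑ k ∈ Ioc K₀ M, 2 ^ β * (M / k : ℝ) ^ β * R M := by
        refine sum_le_sum fun k hk => ?_
        have hk := mem_Ioc.1 hk
        exact potter_bound hmono hX hnn hβ0 hlow (hK₀.trans (Nat.cast_le.2 hk.1.le))
          (Nat.cast_le.2 hk.2)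
    _ ≤ ∑ k ∈ Icc 1 M, 2 ^ β * (M / k : ℝ) ^ β * R M := by
        refine sum_le_sum_of_subset_of_nonneg (fun k hk => ?_) fun k _ _ => by positivity
        simp only [mem_Ioc, mem_Icc] at hk ⊢
        omega
    _ = 2 ^ β * M ^ β * R M * ∑ k ∈ Icc 1 M, (k : ℝ) ^ (-β) := by
        rw [mul_sum]
        refine sum_congr rfl fun k _ => ?_
        rw [div_rpow hM0.le k.cast_nonneg, rpow_neg k.cast_nonneg]
        ring
    _ ≤ 2 ^ β * M ^ β * R M * (M ^ (1 - β) / (1 - β)) := by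
        gcongr
        exact sum_Icc_rpow_neg_le hβ0 hβ1 M
    _ = 2 ^ β / (1 - β) * (M * R M) := by
        rw [rpow_sub hM0, rpow_one]
        field_simp

/-- Karamata's theorem (upper bound), in discrete form. -/
lemma exists_sum_Icc_le_mul (hmono : MonotoneOn R (Set.Ici X) ∨ AntitoneOn R (Set.Ici X))
    (hX : 0 < X) (hpos : ∀ x, X ≤ x → 0 < R x) (hβ0 : 0 ≤ β) (hβ1 : β < 1)
    (hlow : ∀ x, X ≤ x → R x ≤ 2 ^ β * R (2 * x)) {K₀ : ℕ} (hK₀ : X ≤ K₀) :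
    ∃ c, 0 ≤ c ∧ ∀ M : ℕ, K₀ ≤ M → ∑ k ∈ Icc 1 M, R k ≤ c * (M * R M) := by
  have hnn : ∀ x, X ≤ x → 0 ≤ R x := fun x hx => (hpos x hx).le
  set C₀ := ∑ k ∈ Icc 1 K₀, R k
  have hS₀ : 0 < K₀ * R K₀ := mul_pos (hX.trans_le hK₀) (hpos _ hK₀)
  refine ⟨|C₀| / (K₀ * R K₀) * 2 ^ β + 2 ^ β / (1 - β),
    add_nonneg (by positivity) (div_nonneg (by positivity) (by linarith)), fun M hM => ?_⟩
  have hKM : (K₀ : ℝ) ≤ M := Nat.cast_le.2 hM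
  have hM0 : (0 : ℝ) < M := (hX.trans_le hK₀).trans_le hKM
  have hsplit : ∑ k ∈ Icc 1 M, R k = C₀ + ∑ k ∈ Ioc K₀ M, R k := by
    simp only [C₀, Nat.Icc_one_eq_Ioc_zero]
    exact (sum_Ioc_consecutive _ K₀.zero_le hM).symm
  have hhead : C₀ ≤ |C₀| / (K₀ * R K₀) * 2 ^ β * (M * R M) := by
    have hK₀M : (K₀ / M : ℝ) ^ (1 - β) ≤ 1 :=
      rpow_le_one (by positivity) ((div_le_one hM0).2 hKM) (by linarith)
    have hSM : 0 ≤ M * R M := mul_nonneg hM0.le (hnn M (hK₀.trans hKM))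
    calc C₀ ≤ |C₀| / (K₀ * R K₀) * (K₀ * R K₀) := by
          rw [div_mul_cancel₀ _ hS₀.ne']; exact le_abs_self _
      _ ≤ |C₀| / (K₀ * R K₀) * (2 ^ β * (K₀ / M) ^ (1 - β) * (M * R M)) := by
          gcongr _ * ?_
          exact potter_bound_mul_self hmono hX hnn hβ0 hlow hK₀ hKM
      _ ≤ |C₀| / (K₀ * R K₀) * 2 ^ β * (M * R M) := by
          rw [mul_assoc _ (2 ^ β)]
          gcongr
          exact mul_le_of_le_one_right (by positivity) hK₀M
  rw [hsplit]
  linarith [sum_Ioc_le_mul hmono hX hnn hβ0 hβ1 hlow hK₀ hM]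

lemma sum_mul_cos_le_of_le_div (hR0 : ∀ x, 0 < x → 0 ≤ R x)
    (hmono : MonotoneOn R (Set.Ici X) ∨ AntitoneOn R (Set.Ici X)) (hX : 0 < X) (hD : 1 ≤ D)
    (hup : ∀ x, X ≤ x → R (2 * x) ≤ D * R x) {c : ℝ} {M n : ℕ} {t : ℝ}
    (hc : ∑ k ∈ Icc 1 M, R k ≤ c * (M * R M)) (hXM : X ≤ M) (hMn : M < n) (ht : 0 < t)
    (htn : t ≤ n / 2) (hntM : n / t ≤ M) :
    ∑ k ∈ Icc 1 n, R k * cos (2 * π * k * t / n) ≤ (c + D) * (M * R M) + n * R n / t := by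
  have hnn : ∀ x, X ≤ x → 0 ≤ R x := fun x hx => hR0 x (hX.trans_le hx)
  have hM1 : (1 : ℝ) ≤ M := Nat.one_le_cast.2 (by exact_mod_cast hX.trans_le hXM)
  have hmaps : Set.MapsTo (fun k : ℕ => (k : ℝ)) (Set.Ici (M + 1)) (Set.Ici X) := fun k hk =>
    hXM.trans (Nat.cast_le.2 ((Nat.le_succ M).trans hk))
  have hmono' : MonotoneOn (fun k : ℕ => R k) (Set.Ici (M + 1)) ∨
      AntitoneOn (fun k : ℕ => R k) (Set.Ici (M + 1)) :=
    hmono.imp (fun h => h.comp (Nat.mono_cast.monotoneOn _) hmaps)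
      (fun h => h.comp_MonotoneOn (Nat.mono_cast.monotoneOn _) hmaps)
  have hnum := sum_mul_cos_le ht htn hMn (fun k hk => hR0 k (by exact_mod_cast hk)) hmono'
  have hnext : R (M + 1 : ℕ) ≤ D * R M :=
    le_mul_of_le_two_mul hmono hnn hD hup hXM (by push_cast; linarith) (by push_cast; linarith)
  have hnt : 0 ≤ (n : ℝ) / t := by positivity
  have hRM : 0 ≤ D * R M := mul_nonneg (by linarith) (hnn M hXM)
  calc _ ≤ ∑ k ∈ Icc 1 M, R k + (R (M + 1 : ℕ) + R n) * (n / t) := hnum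
    _ ≤ c * (M * R M) + (D * R M * M + R n * (n / t)) := by
      rw [add_mul]
      gcongr
    _ = (c + D) * (M * R M) + n * R n / t := by ring

lemma mul_le_two_mul_sum_Icc (hR0 : ∀ x, 0 < x → 0 ≤ R x)
    (hmono : MonotoneOn R (Set.Ici X) ∨ AntitoneOn R (Set.Ici X)) (hX : 0 < X) (hD : 1 ≤ D)
    (hup : ∀ x, X ≤ x → R (2 * x) ≤ D * R x) {n : ℕ} (hXn : 2 * X ≤ n) :
    n * R n ≤ 2 * D * ∑ k ∈ Icc 1 n, R k := by
  have hnn : ∀ x, X ≤ x → 0 ≤ R x := fun x hx => hR0 x (hX.trans_le hx)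
  have hhalf := half_mul_le_sum_Icc (a := fun k : ℕ => R k) (n := n) (b := R n / D)
    (div_nonneg (hnn n (by linarith)) (by linarith)) (fun k hk => hR0 k (by exact_mod_cast hk))
    fun k hnk hkn => by
      have hnk' : (n : ℝ) ≤ 2 * k := by exact_mod_cast hnk.le
      rw [div_le_iff₀' (by linarith)]
      exact le_mul_of_le_two_mul hmono hnn hD hup (by linarith) (Nat.cast_le.2 hkn) hnk'
  rwa [show (n : ℝ) / 2 * (R n / D) = n * R n / (2 * D) by ring,
    div_le_iff₀' (by linarith)] at hhalf

theorem rescaledCovariance_le_rpow (hR0 : ∀ x, 0 < x → 0 ≤ R x)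
    (hmono : MonotoneOn R (Set.Ici X) ∨ AntitoneOn R (Set.Ici X)) (hX : 0 < X)
    (hpos : ∀ x, X ≤ x → 0 < R x) (hβ0 : 0 ≤ β) (hβ1 : β < 1)
    (hlow : ∀ x, X ≤ x → R x ≤ 2 ^ β * R (2 * x)) (hD : 1 ≤ D)
    (hup : ∀ x, X ≤ x → R (2 * x) ≤ D * R x) :
    ∃ C K, ∀ (n : ℕ) (t : ℝ), K ≤ t → t ≤ n / 2 →
      rescaledCovariance R n t ≤ C * t ^ (-(1 - β)) := by
  have hnn : ∀ x, X ≤ x → 0 ≤ R x := fun x hx => (hpos x hx).le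
  have hK₀ : X ≤ ⌈X⌉₊ := Nat.le_ceil X
  obtain ⟨c, hc0, hc⟩ := exists_sum_Icc_le_mul hmono hX hpos hβ0 hβ1 hlow hK₀
  set K₀ := ⌈X⌉₊
  refine ⟨2 * D * ((c + D) * 2 ^ β * (K₀ + 2) ^ (1 - β) + 1), K₀ + 2, fun n t hKt htn => ?_⟩
  have ht1 : 1 ≤ t := by linarith [(K₀.cast_nonneg : (0 : ℝ) ≤ K₀)]
  obtain ⟨M, hKM, hntM, hMn', hMn⟩ := exists_nat_div_le_and_div_le_div K₀ n hKt htn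
  have hXM : X ≤ M := hK₀.trans (Nat.cast_le.2 hKM)
  have hXn : X ≤ n := hXM.trans (Nat.cast_le.2 hMn.le)
  have hnum := sum_mul_cos_le_of_le_div hR0 hmono hX hD hup (hc M hKM) hXM hMn (by linarith) htn hntM
  have hden := mul_le_two_mul_sum_Icc hR0 hmono hX hD hup (n := n) (by linarith)
  have hSM := potter_bound_mul_self_of_div_le hmono hX hnn hβ0 hβ1.le hlow hXM
    (Nat.cast_le.2 hMn.le) (by linarith) hMn'
  have hinv : n * R n / t ≤ t ^ (-(1 - β)) * (n * R n) := by
    have : t ^ (-1 : ℝ) ≤ t ^ (-(1 - β)) := rpow_le_rpow_of_exponent_le ht1 (by linarith)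
    rw [rpow_neg_one] at this
    have := hnn n hXn
    rw [div_eq_inv_mul]
    gcongr
  have hSn : 0 < n * R n := mul_pos (hX.trans_le hXn) (hpos n hXn)
  set A := (c + D) * 2 ^ β * (K₀ + 2) ^ (1 - β) + 1
  have hA : 0 ≤ A := by positivity
  rw [rescaledCovariance, div_le_iff₀ (by nlinarith)]
  calc _ ≤ (c + D) * (M * R M) + n * R n / t := hnum
    _ ≤ A * t ^ (-(1 - β)) * (n * R n) := by
      have := mul_le_mul_of_nonneg_left hSM (by linarith : 0 ≤ c + D)
      simp only [A]
      linarith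
    _ ≤ A * t ^ (-(1 - β)) * (2 * D * ∑ k ∈ Icc 1 n, R k) := by gcongr
    _ = _ := by ring

end RegularVariation

lemma tendsto_const_mul_rpow_neg_mul_log (C : ℝ) {γ : ℝ} (hγ : 0 < γ) :
    Tendsto (fun t => C * t ^ (-γ) * log t) atTop (nhds 0) := by
  have h := ((isLittleO_log_rpow_atTop hγ).tendsto_div_nhds_zero).const_mul C
  rw [mul_zero] at h
  refine h.congr' ((eventually_gt_atTop 0).mono fun t ht => ?_)
  simp only [rpow_neg ht.le]
  ring

namespace RegularlyVarying

variable {f : ℝ → ℝ} {β : ℝ}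

lemma eventually_pos (hf : RegularlyVarying f β) (hnn : ∀ᶠ x in atTop, 0 ≤ f x) :
    ∀ᶠ x in atTop, 0 < f x := by
  filter_upwards [(hf 1 one_pos).eventually_ne (by simp : (1 : ℝ) ^ β ≠ 0), hnn] with x hx h0
  exact h0.lt_of_ne fun h => hx (by rw [← h, div_zero])

lemma eventually_le_mul (hf : RegularlyVarying f β) (hpos : ∀ᶠ x in atTop, 0 < f x)
    {l c : ℝ} (hl : 0 < l) (hc : l ^ β < c) : ∀ᶠ x in atTop, f (l * x) ≤ c * f x := by
  filter_upwards [(hf l hl).eventually (eventually_lt_nhds hc), hpos] with x hx h0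
  exact ((div_lt_iff₀ h0).1 hx).le

lemma eventually_mul_le (hf : RegularlyVarying f β) (hpos : ∀ᶠ x in atTop, 0 < f x)
    {l c : ℝ} (hl : 0 < l) (hc : c < l ^ β) : ∀ᶠ x in atTop, c * f x ≤ f (l * x) := by
  filter_upwards [(hf l hl).eventually (eventually_gt_nhds hc), hpos] with x hx h0
  exact ((lt_div_iff₀ h0).1 hx).le

end RegularlyVarying

/-- Condition (2) of Seleznjev's theorem for the rescaled `1/f^α`-noise: for every
`ε > 0` there is `T > 0` with `ρ_n(t) log t < ε` for every `n` and `t ∈ [T, n/2]`,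
where `ρ_n(t) = σ_n^{-2} Σ_{k=1}^n R(k) cos(2πkt/n)`. -/
theorem covariance_log_decay
    (R : ℝ → ℝ) (hR0 : ∀ x : ℝ, 0 < x → 0 ≤ R x)
    (α : ℝ) (hα : α < 1)
    (hRV : RegularlyVarying R (-α)) (hRmono : EventuallyMonotone R)
    (ρ : ℕ → ℝ → ℝ)
    (hρ : ∀ (n : ℕ) (t : ℝ), ρ n t =
      (∑ k ∈ Finset.Icc 1 n, R k * Real.cos (2 * π * k * t / n)) /
        (∑ k ∈ Finset.Icc 1 n, R k)) :
    ∀ ε : ℝ, 0 < ε → ∃ T : ℝ, 0 < T ∧ ∀ (n : ℕ) (t : ℝ), T ≤ t → t ≤ (n : ℝ) / 2 →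
      ρ n t * Real.log t < ε := by
  intro ε hε
  obtain ⟨A, hA⟩ := hRmono
  set β := (1 + max α 0) / 2
  have hβ0 : 0 ≤ β := by positivity
  have hβ1 : β < 1 := by simp only [β]; linarith [max_lt hα one_pos]
  have hαβ : -β < -α := by simp only [β]; linarith [le_max_left α 0]
  have hpos := hRV.eventually_pos ((eventually_gt_atTop 0).mono hR0)
  obtain ⟨X, hX⟩ := eventually_atTop.1 <| hpos.and <|
    (hRV.eventually_mul_le hpos two_pos (rpow_lt_rpow_of_exponent_lt one_lt_two hαβ)).and <|
    (hRV.eventually_le_mul hpos two_pos (lt_add_one _)).and (eventually_gt_atTop (max A 0))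
  have hAX : max A 0 < X := (hX X le_rfl).2.2.2
  have hlow : ∀ x, X ≤ x → R x ≤ 2 ^ β * R (2 * x) := fun x hx => by
    rw [← inv_mul_le_iff₀ (by positivity), ← rpow_neg two_pos.le]
    exact (hX x hx).2.1
  obtain ⟨C, K, hC⟩ := rescaledCovariance_le_rpow hR0
    (hA.imp (·.mono (Set.Ici_subset_Ioi.2 (le_max_left A 0 |>.trans_lt hAX)))
      (·.mono (Set.Ici_subset_Ioi.2 (le_max_left A 0 |>.trans_lt hAX))))
    ((le_max_right A 0).trans_lt hAX) (fun x hx => (hX x hx).1) hβ0 hβ1 hlow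
    (by linarith [rpow_pos_of_pos two_pos (-α)]) fun x hx => (hX x hx).2.2.1
  obtain ⟨T, hT⟩ := eventually_atTop.1 <|
    ((tendsto_const_mul_rpow_neg_mul_log C (by linarith : 0 < 1 - β)).eventually
      (gt_mem_nhds hε)).and (eventually_ge_atTop (max K 1))
  refine ⟨max T 1, by positivity, fun n t hTt htn => ?_⟩
  have ht := hT t ((le_max_left _ _).trans hTt)
  calc ρ n t * log t ≤ C * t ^ (-(1 - β)) * log t :=
        mul_le_mul_of_nonneg_right (hρ n t ▸ hC n t ((le_max_left _ _).trans ht.2) htn)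
          (log_nonneg ((le_max_right _ _).trans ht.2))
    _ < ε := ht.1
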